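/- arXiv:2112.04097 — 2 statements merged into one kernel-verified Lean document; each statement's English description precedes it below -/
import Mathlib

section
/- The ∞-digraph ∞(r,s), the coalescence of two directed cycles C⃗_r and C⃗_s at a single vertex (r, s ≥ 2), has complementarity spectrum {0, 1, ρ(∞(r,s))}, where ρ(∞(r,s)) > 1, so it has exactly three complementarity eigenvalues. -/
open Matrix
open scoped Classical

noncomputable section

/-- Adjacency matrix of a digraph given by an arc relation `E`. -/
def adjMat {V : Type*} (E : V → V → Prop) : Matrix V V ℝ :=
  Matrix.of fun i j => if E i j then (1 : ℝ) else 0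

/-- Spectral radius of a real square matrix: the largest modulus of a (complex) eigenvalue. -/
def matSpecRad {n : Type*} [Fintype n] (A : Matrix n n ℝ) : ℝ :=
  sSup {r : ℝ | ∃ μ ∈ spectrum ℂ (A.map (fun x => (x : ℂ))), r = ‖μ‖}

/-- Spectral radius of a digraph. -/
def rho {V : Type*} [Fintype V] (E : V → V → Prop) : ℝ :=
  matSpecRad (adjMat E)

/-- The complementarity spectrum of a real square matrix. -/
def compSpec {n : Type*} [Fintype n] (A : Matrix n n ℝ) : Set ℝ :=
  {lam | ∃ x : n → ℝ, x ≠ 0 ∧ 0 ≤ x ∧ 0 ≤ A.mulVec x - lam • x ∧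
    x ⬝ᵥ (A.mulVec x - lam • x) = 0}

/-- Reachability by directed paths. -/
def Reach {V : Type*} (E : V → V → Prop) : V → V → Prop :=
  Relation.ReflTransGen E

/-- A digraph is strongly connected if every vertex reaches every other one. -/
def StronglyConnected {V : Type*} (E : V → V → Prop) : Prop :=
  ∀ u v, Reach E u v

/-- Induced subdigraph on a vertex subset `S`. -/
def induceRel {V : Type*} (E : V → V → Prop) (S : Set V) : S → S → Prop :=
  fun a b => E a.1 b.1

/-- Spectral radius of the induced subdigraph on `S`. -/
def specRadOn {V : Type*} [Fintype V] (E : V → V → Prop) (S : Set V) : ℝ :=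
  @rho S (Set.Finite.fintype S.toFinite) (induceRel E S)

/-- Complementarity spectrum of the induced subdigraph on `S`. -/
def compSpecOn {V : Type*} [Fintype V] (E : V → V → Prop) (S : Set V) : Set ℝ :=
  @compSpec S (Set.Finite.fintype S.toFinite) (adjMat (induceRel E S))

/-- Isomorphism of digraphs. -/
def IsoDigraph {V W : Type*} (E : V → V → Prop) (F : W → W → Prop) : Prop :=
  ∃ e : V ≃ W, ∀ a b, E a b ↔ F (e a) (e b)

/-- The directed cycle on `n` vertices. -/
def cycleRel (n : ℕ) : ZMod n → ZMod n → Prop := fun i j => j = i + 1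

/-- A digraph is a directed cycle if it is isomorphic to some `C⃗_n`, `n ≥ 2`. -/
def IsCycleDigraph {V : Type*} (E : V → V → Prop) : Prop :=
  ∃ n : ℕ, 2 ≤ n ∧ IsoDigraph E (cycleRel n)

/-- A digraph is acyclic if it has no directed cycle. -/
def Acyclic {V : Type*} (E : V → V → Prop) : Prop :=
  ∀ v, ¬ Relation.TransGen E v v

/-- Strongly connected component of the vertex `v`. -/
def component {V : Type*} (E : V → V → Prop) (v : V) : Set V :=
  {u | Reach E u v ∧ Reach E v u}

/-- `D` has an `∞(r,s)`-subdigraph: two directed cycles of lengths `r` and `s`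
sharing exactly one vertex, all of whose arcs are arcs of `D`. -/
def InftySub {V : Type*} (E : V → V → Prop) (r s : ℕ) : Prop :=
  ∃ (f : ZMod r → V) (g : ZMod s → V),
    Function.Injective f ∧ Function.Injective g ∧ f 0 = g 0 ∧
    Set.range f ∩ Set.range g = {f 0} ∧
    (∀ i, E (f i) (f (i + 1))) ∧ (∀ j, E (g j) (g (j + 1)))

/-- `D` has a `θ(a,b,c)`-subdigraph: three internally disjoint directed paths,
two from `v` to `w` (of lengths `a+1` and `b+1`) and one from `w` to `v`
(of length `c+1`), all of whose arcs are arcs of `D`. -/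
def ThetaSub {V : Type*} (E : V → V → Prop) (a b c : ℕ) : Prop :=
  ∃ (P : Fin (a + 2) → V) (Q : Fin (b + 2) → V) (R : Fin (c + 2) → V),
    Function.Injective P ∧ Function.Injective Q ∧ Function.Injective R ∧
    P 0 = Q 0 ∧ Q 0 = R (Fin.last (c + 1)) ∧
    P (Fin.last (a + 1)) = Q (Fin.last (b + 1)) ∧ Q (Fin.last (b + 1)) = R 0 ∧
    (∀ i j, P i = Q j → (i = 0 ∧ j = 0) ∨ (i = Fin.last (a + 1) ∧ j = Fin.last (b + 1))) ∧
    (∀ i j, P i = R j → (i = 0 ∧ j = Fin.last (c + 1)) ∨ (i = Fin.last (a + 1) ∧ j = 0)) ∧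
    (∀ i j, Q i = R j → (i = 0 ∧ j = Fin.last (c + 1)) ∨ (i = Fin.last (b + 1) ∧ j = 0)) ∧
    (∀ i : Fin (a + 1), E (P i.castSucc) (P i.succ)) ∧
    (∀ i : Fin (b + 1), E (Q i.castSucc) (Q i.succ)) ∧
    (∀ i : Fin (c + 1), E (R i.castSucc) (R i.succ))

/-- `D` is (isomorphic to) the `∞(r,s)` digraph: the coalescence of the directed
cycles `C⃗_r` and `C⃗_s` at one vertex, with no further vertices or arcs. -/
def IsInftyDigraph {V : Type*} (E : V → V → Prop) (r s : ℕ) : Prop :=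
  ∃ (f : ZMod r → V) (g : ZMod s → V),
    Function.Injective f ∧ Function.Injective g ∧ f 0 = g 0 ∧
    Set.range f ∩ Set.range g = {f 0} ∧
    Set.range f ∪ Set.range g = Set.univ ∧
    ∀ u v, E u v ↔ ((∃ i, u = f i ∧ v = f (i + 1)) ∨ (∃ j, u = g j ∧ v = g (j + 1)))

/-- `D` is (isomorphic to) the `θ(a,b,c)` digraph: three internally disjoint
directed paths, two from `v` to `w` and one from `w` to `v`, with no further
vertices or arcs. -/
def IsThetaDigraph {V : Type*} (E : V → V → Prop) (a b c : ℕ) : Prop :=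
  ∃ (P : Fin (a + 2) → V) (Q : Fin (b + 2) → V) (R : Fin (c + 2) → V),
    Function.Injective P ∧ Function.Injective Q ∧ Function.Injective R ∧
    P 0 = Q 0 ∧ Q 0 = R (Fin.last (c + 1)) ∧
    P (Fin.last (a + 1)) = Q (Fin.last (b + 1)) ∧ Q (Fin.last (b + 1)) = R 0 ∧
    (∀ i j, P i = Q j → (i = 0 ∧ j = 0) ∨ (i = Fin.last (a + 1) ∧ j = Fin.last (b + 1))) ∧
    (∀ i j, P i = R j → (i = 0 ∧ j = Fin.last (c + 1)) ∨ (i = Fin.last (a + 1) ∧ j = 0)) ∧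
    (∀ i j, Q i = R j → (i = 0 ∧ j = Fin.last (c + 1)) ∨ (i = Fin.last (b + 1) ∧ j = 0)) ∧
    Set.range P ∪ Set.range Q ∪ Set.range R = Set.univ ∧
    (∀ u v, E u v ↔
      ((∃ i : Fin (a + 1), u = P i.castSucc ∧ v = P i.succ) ∨
       (∃ i : Fin (b + 1), u = Q i.castSucc ∧ v = Q i.succ) ∨
       (∃ i : Fin (c + 1), u = R i.castSucc ∧ v = R i.succ)))

/-! Write `z` for the common vertex of the two cycles; it is the only vertex with two
out-neighbours. If `x` is a complementarity eigenvector for `λ > 0`, then `A x = λ x` on the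
support of `x`, so the support runs along the cycles into `z`, and on each cycle `x` equals
`λ⁻ᵈ x(z)`, `d` being the distance to `z`. The equation at `z` leaves three cases: if only one
cycle meets the support then `λ⁻ʳ = 1` or `λ⁻ˢ = 1`, so `λ = 1`; if both do then
`λ⁻ʳ + λ⁻ˢ = 1`, whose positive root is unique. Conversely the indicator vectors of `{z}` and of
one cycle realise `0` and `1`, and `v ↦ u ^ d(v)` with `uʳ + uˢ = 1` is a positive eigenvector for
`u⁻¹`; a positive eigenvector of a nonnegative matrix belongs to its spectral radius. -/

lemma Matrix.mem_spectrum_iff_exists_mulVec_eq_smul {n K : Type*} [Fintype n] [DecidableEq n]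
    [Field K] (A : Matrix n n K) (μ : K) :
    μ ∈ spectrum K A ↔ ∃ v ≠ 0, A *ᵥ v = μ • v := by
  rw [← Matrix.spectrum_toLin', ← Module.End.hasEigenvalue_iff_mem_spectrum]
  constructor
  · intro h
    obtain ⟨v, hv, hv0⟩ := h.exists_hasEigenvector
    exact ⟨v, hv0, by simpa using Module.End.mem_eigenspace_iff.1 hv⟩
  · rintro ⟨v, hv0, hv⟩
    exact Module.End.hasEigenvalue_of_hasEigenvector
      ⟨Module.End.mem_eigenspace_iff.2 (by simpa using hv), hv0⟩

section PositiveEigenvector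

variable {n : Type*} [Fintype n] {A : Matrix n n ℝ} {X : n → ℝ} {t : ℝ}

lemma ofReal_mem_spectrum_map_of_mulVec_eq_smul (hX : X ≠ 0) (hAX : A *ᵥ X = t • X) :
    (t : ℂ) ∈ spectrum ℂ (A.map (fun x : ℝ => (x : ℂ))) := by
  rw [Matrix.mem_spectrum_iff_exists_mulVec_eq_smul]
  refine ⟨fun i => (X i : ℂ), fun h => hX (funext fun i => by simpa using congrFun h i), ?_⟩
  ext i
  have := congrFun hAX i
  simp only [Matrix.mulVec, dotProduct, Matrix.map_apply, Pi.smul_apply, smul_eq_mul] at this ⊢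
  exact_mod_cast this

lemma norm_le_of_mem_spectrum_map (hA : ∀ i j, 0 ≤ A i j) (hX : ∀ i, 0 < X i)
    (hAX : A *ᵥ X = t • X) {μ : ℂ} (hμ : μ ∈ spectrum ℂ (A.map (fun x : ℝ => (x : ℂ)))) :
    ‖μ‖ ≤ t := by
  obtain ⟨y, hy0, hy⟩ := (Matrix.mem_spectrum_iff_exists_mulVec_eq_smul _ _).1 hμ
  obtain ⟨i₀, hi₀⟩ : ∃ i, y i ≠ 0 := Function.ne_iff.1 hy0
  obtain ⟨k, -, hk⟩ :=
    Finset.exists_max_image Finset.univ (fun i => ‖y i‖ / X i) ⟨i₀, Finset.mem_univ _⟩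
  set c := ‖y k‖ / X k
  have hyc : ∀ i, ‖y i‖ ≤ c * X i := fun i => (div_le_iff₀ (hX i)).1 (hk i (Finset.mem_univ i))
  have hyk : 0 < ‖y k‖ := by
    have := hk i₀ (Finset.mem_univ _)
    have : 0 < ‖y i₀‖ / X i₀ := div_pos (norm_pos_iff.2 hi₀) (hX i₀)
    exact (div_pos_iff_of_pos_right (hX k)).1 (by linarith)
  refine le_of_mul_le_mul_right ?_ hyk
  calc ‖μ‖ * ‖y k‖ = ‖(A.map (fun x : ℝ => (x : ℂ)) *ᵥ y) k‖ := by rw [hy]; simp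
    _ ≤ ∑ j, A k j * ‖y j‖ := by
        refine (norm_sum_le _ _).trans (Finset.sum_le_sum fun j _ => ?_)
        simp [abs_of_nonneg (hA k j)]
    _ ≤ ∑ j, A k j * (c * X j) :=
        Finset.sum_le_sum fun j _ => mul_le_mul_of_nonneg_left (hyc j) (hA k j)
    _ = c * (A *ᵥ X) k := by
        simp only [Matrix.mulVec, dotProduct, Finset.mul_sum]
        exact Finset.sum_congr rfl fun j _ => by ring
    _ = t * ‖y k‖ := by
        rw [hAX, Pi.smul_apply, smul_eq_mul, mul_left_comm, div_mul_cancel₀ _ (hX k).ne']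

theorem matSpecRad_eq_of_mulVec_eq_smul [Nonempty n] (hA : ∀ i j, 0 ≤ A i j)
    (hX : ∀ i, 0 < X i) (hAX : A *ᵥ X = t • X) : matSpecRad A = t := by
  have ht : 0 ≤ t := by
    obtain ⟨i⟩ := ‹Nonempty n›
    have h := congrFun hAX i
    simp only [Matrix.mulVec, dotProduct, Pi.smul_apply, smul_eq_mul] at h
    exact nonneg_of_mul_nonneg_left
      (h ▸ Finset.sum_nonneg fun j _ => mul_nonneg (hA i j) (hX j).le) (hX i)
  refine IsGreatest.csSup_eq ⟨⟨t, ?_, by simp [abs_of_nonneg ht]⟩, ?_⟩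
  · exact ofReal_mem_spectrum_map_of_mulVec_eq_smul
      (Function.ne_iff.2 ⟨Classical.arbitrary n, (hX _).ne'⟩) hAX
  · rintro _ ⟨μ, hμ, rfl⟩
    exact norm_le_of_mem_spectrum_map hA hX hAX hμ

end PositiveEigenvector

section ComplementarityEigenvalue

variable {n : Type*} [Fintype n] {A : Matrix n n ℝ} {x : n → ℝ} {t : ℝ}

/-- `t ∈ compSpec A` means that `IsCompEigenvector A t x` for some `x ≠ 0`. -/
def IsCompEigenvector (A : Matrix n n ℝ) (t : ℝ) (x : n → ℝ) : Prop :=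
  0 ≤ x ∧ 0 ≤ A *ᵥ x - t • x ∧ x ⬝ᵥ (A *ᵥ x - t • x) = 0

lemma mem_compSpec_of_mulVec_eq_smul (hx : x ≠ 0) (hx0 : 0 ≤ x) (hAx : A *ᵥ x = t • x) :
    t ∈ compSpec A :=
  ⟨x, hx, hx0, by simp [hAx], by simp [hAx]⟩

lemma exists_pos_of_ne_zero (hx : x ≠ 0) (hx0 : 0 ≤ x) : ∃ i, 0 < x i := by
  by_contra! h
  exact hx (funext fun i => le_antisymm (h i) (hx0 i))

lemma IsCompEigenvector.mulVec_apply_eq (hx : IsCompEigenvector A t x) {i : n} (hi : 0 < x i) :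
    (A *ᵥ x) i = t * x i := by
  obtain ⟨hx0, hAx, hcomp⟩ := hx
  have hterm := (Finset.sum_eq_zero_iff_of_nonneg fun j _ => mul_nonneg (hx0 j) (hAx j)).1 hcomp i
    (Finset.mem_univ i)
  simp only [Pi.sub_apply, Pi.smul_apply, smul_eq_mul, mul_eq_zero, hi.ne', false_or] at hterm
  linarith

lemma nonneg_of_mem_compSpec (hA : ∀ i j, 0 ≤ A i j) (ht : t ∈ compSpec A) : 0 ≤ t := by
  obtain ⟨x, hx, hx' : IsCompEigenvector A t x⟩ := ht
  obtain ⟨i, hi⟩ := exists_pos_of_ne_zero hx hx'.1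
  have : 0 ≤ (A *ᵥ x) i := Finset.sum_nonneg fun j _ => mul_nonneg (hA i j) (hx'.1 j)
  exact nonneg_of_mul_nonneg_left (hx'.mulVec_apply_eq hi ▸ this) hi

end ComplementarityEigenvalue

section Digraph

variable {V : Type*} {E : V → V → Prop}

lemma adjMat_nonneg (u v : V) : 0 ≤ adjMat E u v := by
  simp only [adjMat, Matrix.of_apply]
  split_ifs <;> norm_num

variable [Fintype V]

lemma adjMat_mulVec_apply (x : V → ℝ) (u : V) :
    (adjMat E *ᵥ x) u = ∑ v ∈ Finset.univ.filter (E u), x v := by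
  simp [adjMat, Matrix.mulVec, dotProduct, Finset.sum_filter]

lemma natCast_mem_compSpec_adjMat {S : Finset V} (hS : S.Nonempty) (k : ℕ)
    (hk : ∀ u ∈ S, (S.filter (E u)).card = k) : (k : ℝ) ∈ compSpec (adjMat E) := by
  set x : V → ℝ := fun v => if v ∈ S then 1 else 0
  have hAx : ∀ u, (adjMat E *ᵥ x) u = (S.filter (E u)).card := by
    intro u
    simp [x, adjMat_mulVec_apply, Finset.filter_inter]
  have hgap : ∀ u, (adjMat E *ᵥ x - (k : ℝ) • x) u = if u ∈ S then 0 else (adjMat E *ᵥ x) u := by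
    intro u
    by_cases hu : u ∈ S <;> simp [hu, hAx, hk, x]
  refine ⟨x, fun h => ?_, fun v => ?_, fun u => ?_, Finset.sum_eq_zero fun u _ => ?_⟩
  · obtain ⟨v, hv⟩ := hS
    simpa [x, hv] using congrFun h v
  · by_cases hv : v ∈ S <;> simp [x, hv]
  · rw [hgap]; split_ifs <;> simp [hAx]
  · by_cases hu : u ∈ S <;> simp [hgap, hu, x]

end Digraph

lemma strictMonoOn_pow_add_pow {r s : ℕ} (hr : r ≠ 0) (hs : s ≠ 0) :
    StrictMonoOn (fun u : ℝ => u ^ r + u ^ s) (Set.Ici 0) :=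
  fun _ ha _ _ hab => add_lt_add (pow_lt_pow_left₀ hab ha hr) (pow_lt_pow_left₀ hab ha hs)

lemma exists_pow_add_pow_eq_one {r s : ℕ} (hr : r ≠ 0) (hs : s ≠ 0) :
    ∃ u : ℝ, 0 < u ∧ u < 1 ∧ u ^ r + u ^ s = 1 := by
  obtain ⟨u, ⟨hu0, hu1⟩, hu⟩ := intermediate_value_Icc (zero_le_one' ℝ)
    (f := fun u : ℝ => u ^ r + u ^ s) (by fun_prop) (by simp [hr, hs] : (1 : ℝ) ∈ Set.Icc _ _)
  refine ⟨u, hu0.lt_of_ne ?_, hu1.lt_of_ne ?_, hu⟩ <;> rintro rfl <;> norm_num [hr, hs] at hu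

lemma ZMod.val_neg_add_one_add_one {n : ℕ} [Fact (1 < n)] {i : ZMod n} (hi : i ≠ 0) :
    (-(i + 1)).val + 1 = (-i).val := by
  have h : -i = -(i + 1) + 1 := by ring
  have hlt : (-(i + 1)).val + 1 < n := by
    by_contra! hle
    have := ZMod.val_add_val_of_le (a := -(i + 1)) (b := 1) (by rwa [ZMod.val_one])
    rw [← h, ZMod.val_one] at this
    have : (-i).val = 0 := by have := (-(i + 1)).val_lt; omega
    exact hi (neg_eq_zero.1 ((ZMod.val_eq_zero _).1 this))
  rw [h, ZMod.val_add_of_lt (by rwa [ZMod.val_one]), ZMod.val_one]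

lemma ZMod.val_neg_one_add_one {n : ℕ} [Fact (1 < n)] : (-1 : ZMod n).val + 1 = n := by
  have := (Fact.out : 1 < n)
  rw [ZMod.neg_val, if_neg one_ne_zero, ZMod.val_one]
  omega

/-- `(-i).val` is the number of steps `i ↦ i + 1` from `i` to `0`. -/
lemma ZMod.eq_inv_pow_mul_of_step {n : ℕ} [Fact (1 < n)] {y : ZMod n → ℝ} {c : ℝ} (hc : 0 < c)
    (step : ∀ i ≠ 0, 0 < y i → y (i + 1) = c * y i) {i : ZMod n} (hi : 0 < y i) :
    y i = c⁻¹ ^ (-i).val * y 0 := by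
  induction hk : (-i).val generalizing i with
  | zero => simp [neg_eq_zero.1 ((ZMod.val_eq_zero _).1 hk)]
  | succ k ih =>
    have hi0 : i ≠ 0 := by rintro rfl; simp at hk
    have hstep := step i hi0 hi
    have := ih (hstep ▸ mul_pos hc hi) (by have := ZMod.val_neg_add_one_add_one hi0; omega)
    rw [pow_succ', mul_assoc, ← this, hstep, inv_mul_cancel_left₀ hc.ne']

structure IsInftyPresentation {V : Type*} (E : V → V → Prop) {r s : ℕ} (f : ZMod r → V)
    (g : ZMod s → V) : Prop where
  injective_left : Function.Injective f
  injective_right : Function.Injective g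
  left_zero : f 0 = g 0
  range_inter : Set.range f ∩ Set.range g = {f 0}
  range_union : Set.range f ∪ Set.range g = Set.univ
  adj_iff : ∀ u v, E u v ↔ (∃ i, u = f i ∧ v = f (i + 1)) ∨ (∃ j, u = g j ∧ v = g (j + 1))

/-- The Perron vector of `∞(r,s)`: `u ^ d`, where `d` is the distance to the common vertex. -/
def inftyPerronVector {V : Type*} {r s : ℕ} (f : ZMod r → V) (g : ZMod s → V) (u : ℝ) : V → ℝ :=
  Function.extend f (fun i => u ^ (-i).val) (Function.extend g (fun j => u ^ (-j).val) 0)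

namespace IsInftyPresentation

variable {V : Type*} {E : V → V → Prop} {r s : ℕ} {f : ZMod r → V} {g : ZMod s → V}
  (hD : IsInftyPresentation E f g)
include hD

lemma eq_zero_of_left_eq_right {i : ZMod r} {j : ZMod s} (h : f i = g j) : i = 0 ∧ j = 0 := by
  have hi : f i ∈ Set.range f ∩ Set.range g := ⟨⟨i, rfl⟩, ⟨j, h.symm⟩⟩
  rw [hD.range_inter, Set.mem_singleton_iff] at hi
  have hi := hD.injective_left hi
  exact ⟨hi, hD.injective_right (by rw [← h, hi, hD.left_zero])⟩

@[elab_as_elim]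
lemma forall_vertex {P : V → Prop} (hf : ∀ i, P (f i)) (hg : ∀ j, P (g j)) (v : V) : P v := by
  have hv : v ∈ Set.range f ∪ Set.range g := hD.range_union ▸ Set.mem_univ v
  obtain ⟨i, rfl⟩ | ⟨j, rfl⟩ := hv
  exacts [hf i, hg j]

lemma adj_left_iff (i : ZMod r) (v : V) : E (f i) v ↔ v = f (i + 1) ∨ (i = 0 ∧ v = g 1) := by
  rw [hD.adj_iff]
  constructor
  · rintro (⟨i', hi, rfl⟩ | ⟨j, hj, rfl⟩)
    · rw [hD.injective_left hi]; exact Or.inl rfl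
    · obtain ⟨rfl, rfl⟩ := hD.eq_zero_of_left_eq_right hj
      exact Or.inr ⟨rfl, by rw [zero_add]⟩
  · rintro (rfl | ⟨rfl, rfl⟩)
    · exact Or.inl ⟨i, rfl, rfl⟩
    · exact Or.inr ⟨0, hD.left_zero, by rw [zero_add]⟩

lemma adj_right_iff (j : ZMod s) (v : V) : E (g j) v ↔ v = g (j + 1) ∨ (j = 0 ∧ v = f 1) := by
  rw [hD.adj_iff]
  constructor
  · rintro (⟨i, hi, rfl⟩ | ⟨j', hj, rfl⟩)
    · obtain ⟨rfl, rfl⟩ := hD.eq_zero_of_left_eq_right hi.symm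
      exact Or.inr ⟨rfl, by rw [zero_add]⟩
    · rw [hD.injective_right hj]; exact Or.inl rfl
  · rintro (rfl | ⟨rfl, rfl⟩)
    · exact Or.inr ⟨j, rfl, rfl⟩
    · exact Or.inl ⟨0, hD.left_zero.symm, by rw [zero_add]⟩

lemma perronVector_left (u : ℝ) (i : ZMod r) : inftyPerronVector f g u (f i) = u ^ (-i).val :=
  hD.injective_left.extend_apply _ _ i

lemma perronVector_right (u : ℝ) (j : ZMod s) : inftyPerronVector f g u (g j) = u ^ (-j).val := by
  by_cases hj : j = 0
  · subst hj
    rw [← hD.left_zero, hD.perronVector_left]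
    simp
  · rw [inftyPerronVector, Function.extend_apply' _ _ _
      (by rintro ⟨i, hi⟩; exact hj (hD.eq_zero_of_left_eq_right hi).2),
      hD.injective_right.extend_apply]

lemma perronVector_pos {u : ℝ} (hu0 : 0 < u) (v : V) : 0 < inftyPerronVector f g u v :=
  hD.forall_vertex (fun i => by rw [hD.perronVector_left]; positivity)
    (fun j => by rw [hD.perronVector_right]; positivity) v

variable [Fintype V]

lemma mulVec_left (x : V → ℝ) {i : ZMod r} (hi : i ≠ 0) :
    (adjMat E *ᵥ x) (f i) = x (f (i + 1)) := by
  rw [adjMat_mulVec_apply, show Finset.univ.filter (E (f i)) = {f (i + 1)} by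
    ext v; simp [hD.adj_left_iff, hi], Finset.sum_singleton]

lemma mulVec_right (x : V → ℝ) {j : ZMod s} (hj : j ≠ 0) :
    (adjMat E *ᵥ x) (g j) = x (g (j + 1)) := by
  rw [adjMat_mulVec_apply, show Finset.univ.filter (E (g j)) = {g (j + 1)} by
    ext v; simp [hD.adj_right_iff, hj], Finset.sum_singleton]

lemma mulVec_center [Fact (1 < r)] (x : V → ℝ) : (adjMat E *ᵥ x) (f 0) = x (f 1) + x (g 1) := by
  have hne : f 1 ≠ g 1 := fun h => one_ne_zero (hD.eq_zero_of_left_eq_right h).1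
  rw [adjMat_mulVec_apply, show Finset.univ.filter (E (f 0)) = {f 1, g 1} by
    ext v; simp [hD.adj_left_iff], Finset.sum_pair hne]

section CompEigenvector

variable {x : V → ℝ} {t : ℝ} (hx : IsCompEigenvector (adjMat E) t x) (ht : 0 < t)
include hx ht

lemma compEigenvector_left [Fact (1 < r)] {i : ZMod r} (hi : 0 < x (f i)) :
    x (f i) = t⁻¹ ^ (-i).val * x (f 0) :=
  ZMod.eq_inv_pow_mul_of_step (y := x ∘ f) ht
    (fun _ hi h => (hD.mulVec_left x hi).symm.trans (hx.mulVec_apply_eq h)) hi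

lemma compEigenvector_right [Fact (1 < s)] {j : ZMod s} (hj : 0 < x (g j)) :
    x (g j) = t⁻¹ ^ (-j).val * x (f 0) :=
  hD.left_zero ▸ ZMod.eq_inv_pow_mul_of_step (y := x ∘ g) ht
    (fun _ hj h => (hD.mulVec_right x hj).symm.trans (hx.mulVec_apply_eq h)) hj

lemma compEigenvector_center_pos [Fact (1 < r)] [Fact (1 < s)] (hx0 : x ≠ 0) : 0 < x (f 0) := by
  obtain ⟨v, hv⟩ := exists_pos_of_ne_zero hx0 hx.1
  revert hv
  refine hD.forall_vertex (fun i hi => ?_) (fun j hj => ?_) v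
  · exact pos_of_mul_pos_right (hD.compEigenvector_left hx ht hi ▸ hi) (by positivity)
  · exact pos_of_mul_pos_right (hD.compEigenvector_right hx ht hj ▸ hj) (by positivity)

end CompEigenvector

variable [Fact (1 < r)] [Fact (1 < s)]

lemma adjMat_mulVec_perronVector {u : ℝ} (hu0 : 0 < u) (hu : u ^ r + u ^ s = 1) :
    adjMat E *ᵥ inftyPerronVector f g u = u⁻¹ • inftyPerronVector f g u := by
  have hstep : ∀ {n : ℕ} [Fact (1 < n)] {i : ZMod n}, i ≠ 0 →
      u ^ (-(i + 1)).val = u⁻¹ * u ^ (-i).val := fun hi => by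
    rw [← ZMod.val_neg_add_one_add_one hi, pow_succ', inv_mul_cancel_left₀ hu0.ne']
  have hcenter : (adjMat E *ᵥ inftyPerronVector f g u) (f 0) =
      u⁻¹ * inftyPerronVector f g u (f 0) :=
    calc _ = u⁻¹ * (u ^ ((-1 : ZMod r).val + 1) + u ^ ((-1 : ZMod s).val + 1)) := by
          rw [hD.mulVec_center, hD.perronVector_left, hD.perronVector_right, pow_succ',
            pow_succ', ← mul_add, inv_mul_cancel_left₀ hu0.ne']
      _ = _ := by simp [ZMod.val_neg_one_add_one, hu, hD.perronVector_left]
  funext v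
  refine hD.forall_vertex (fun i => ?_) (fun j => ?_) v <;> simp only [Pi.smul_apply, smul_eq_mul]
  · rcases eq_or_ne i 0 with rfl | hi
    · exact hcenter
    · rw [hD.mulVec_left _ hi, hD.perronVector_left, hD.perronVector_left, hstep hi]
  · rcases eq_or_ne j 0 with rfl | hj
    · rw [← hD.left_zero, hcenter]
    · rw [hD.mulVec_right _ hj, hD.perronVector_right, hD.perronVector_right, hstep hj]

lemma rho_eq {u : ℝ} (hu0 : 0 < u) (hu : u ^ r + u ^ s = 1) : rho E = u⁻¹ :=
  have : Nonempty V := ⟨f 0⟩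
  matSpecRad_eq_of_mulVec_eq_smul adjMat_nonneg (hD.perronVector_pos hu0)
    (hD.adjMat_mulVec_perronVector hu0 hu)

lemma zero_mem_compSpec : (0 : ℝ) ∈ compSpec (adjMat E) := by
  have hloop : ¬ E (f 0) (f 0) := by
    rw [hD.adj_left_iff]
    rintro (h | ⟨-, h⟩)
    · exact one_ne_zero (zero_add (1 : ZMod r) ▸ hD.injective_left h).symm
    · exact one_ne_zero (hD.eq_zero_of_left_eq_right h).2
  exact_mod_cast natCast_mem_compSpec_adjMat (Finset.singleton_nonempty (f 0)) 0
    (by simp [Finset.filter_singleton, hloop])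

lemma one_mem_compSpec : (1 : ℝ) ∈ compSpec (adjMat E) := by
  suffices h : ∀ u ∈ Finset.univ.image f, ((Finset.univ.image f).filter (E u)).card = 1 by
    exact_mod_cast natCast_mem_compSpec_adjMat (Finset.univ_nonempty.image f) 1 h
  simp only [Finset.mem_image, Finset.mem_univ, true_and, forall_exists_index,
    forall_apply_eq_imp_iff, Finset.card_eq_one]
  refine fun i => ⟨f (i + 1), Finset.ext fun v => ?_⟩
  simp only [Finset.mem_filter, Finset.mem_image, Finset.mem_univ, true_and, hD.adj_left_iff,
    Finset.mem_singleton]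
  constructor
  · rintro ⟨⟨a, rfl⟩, h | ⟨-, h⟩⟩
    · exact h
    · exact absurd (hD.eq_zero_of_left_eq_right h).2 one_ne_zero
  · rintro rfl
    exact ⟨⟨_, rfl⟩, Or.inl rfl⟩

lemma eq_one_or_inv_pow_add_inv_pow_eq_one {t : ℝ} (ht : t ∈ compSpec (adjMat E)) (ht0 : 0 < t) :
    t = 1 ∨ t⁻¹ ^ r + t⁻¹ ^ s = 1 := by
  obtain ⟨x, hx0, hx : IsCompEigenvector _ t x⟩ := ht
  have ha := hD.compEigenvector_center_pos hx ht0 hx0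
  have hcenter : t⁻¹ * x (f 1) + t⁻¹ * x (g 1) = x (f 0) := by
    rw [← mul_add, ← hD.mulVec_center, hx.mulVec_apply_eq ha, inv_mul_cancel_left₀ ht0.ne']
  have hleft (h : 0 < x (f 1)) : t⁻¹ * x (f 1) = t⁻¹ ^ r * x (f 0) := by
    rw [hD.compEigenvector_left hx ht0 h, ← mul_assoc, ← pow_succ', ZMod.val_neg_one_add_one]
  have hright (h : 0 < x (g 1)) : t⁻¹ * x (g 1) = t⁻¹ ^ s * x (f 0) := by
    rw [hD.compEigenvector_right hx ht0 h, ← mul_assoc, ← pow_succ', ZMod.val_neg_one_add_one]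
  have hone {n : ℕ} (hn : n ≠ 0) (h : t⁻¹ ^ n * x (f 0) = x (f 0)) : t = 1 :=
    inv_eq_one.1 ((pow_eq_one_iff_of_nonneg (by positivity) hn).1 ((mul_eq_right₀ ha.ne').1 h))
  have hr : r ≠ 0 := (Fact.out : 1 < r).ne_bot
  have hs : s ≠ 0 := (Fact.out : 1 < s).ne_bot
  have hnn : ∀ v, 0 ≤ x v := hx.1
  rcases (hnn (f 1)).eq_or_lt with hp | hp <;> rcases (hnn (g 1)).eq_or_lt with hq | hq
  · rw [← hp, ← hq] at hcenter
    simp [ha.ne] at hcenter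
  · rw [← hp, mul_zero, zero_add, hright hq] at hcenter
    exact Or.inl (hone hs hcenter)
  · rw [← hq, mul_zero, add_zero, hleft hp] at hcenter
    exact Or.inl (hone hr hcenter)
  · rw [hleft hp, hright hq, ← add_mul] at hcenter
    exact Or.inr ((mul_eq_right₀ ha.ne').1 hcenter)

lemma compSpec_eq {u : ℝ} (hu0 : 0 < u) (hu : u ^ r + u ^ s = 1) :
    compSpec (adjMat E) = {0, 1, u⁻¹} := by
  ext t
  refine ⟨fun ht => ?_, ?_⟩
  · rcases (nonneg_of_mem_compSpec adjMat_nonneg ht).eq_or_lt with rfl | ht0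
    · exact Or.inl rfl
    rcases hD.eq_one_or_inv_pow_add_inv_pow_eq_one ht ht0 with h | h
    · exact Or.inr (Or.inl h)
    · have hr : r ≠ 0 := (Fact.out : 1 < r).ne_bot
      have hs : s ≠ 0 := (Fact.out : 1 < s).ne_bot
      exact Or.inr (Or.inr (inv_eq_iff_eq_inv.1 ((strictMonoOn_pow_add_pow hr hs).injOn
        (inv_nonneg.2 ht0.le) hu0.le (h.trans hu.symm))))
  · rintro (rfl | rfl | rfl)
    · exact hD.zero_mem_compSpec
    · exact hD.one_mem_compSpec
    · exact mem_compSpec_of_mulVec_eq_smul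
        (Function.ne_iff.2 ⟨f 0, (hD.perronVector_pos hu0 _).ne'⟩)
        (fun v => (hD.perronVector_pos hu0 v).le) (hD.adjMat_mulVec_perronVector hu0 hu)

end IsInftyPresentation

/-- the `∞(r,s)` digraph has complementarity spectrum `{0, 1, ρ}` with
`ρ > 1`, hence exactly three complementarity eigenvalues. -/
theorem stmt14 {V : Type*} [Fintype V] (E : V → V → Prop) (r s : ℕ)
    (hr : 2 ≤ r) (hs : 2 ≤ s) (h : IsInftyDigraph E r s) :
    compSpec (adjMat E) = {0, 1, rho E} ∧ 1 < rho E ∧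
      (compSpec (adjMat E)).ncard = 3 := by
  obtain ⟨f, g, hf, hg, h0, hinter, hunion, hadj⟩ := h
  have hD : IsInftyPresentation E f g := ⟨hf, hg, h0, hinter, hunion, hadj⟩
  have : Fact (1 < r) := ⟨hr⟩
  have : Fact (1 < s) := ⟨hs⟩
  obtain ⟨u, hu0, hu1, hu⟩ := exists_pow_add_pow_eq_one (by omega : r ≠ 0) (by omega : s ≠ 0)
  have hspec := hD.compSpec_eq hu0 hu
  have hρ := hD.rho_eq hu0 hu
  have hρ1 : 1 < u⁻¹ := (one_lt_inv₀ hu0).2 hu1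
  refine ⟨hρ ▸ hspec, hρ ▸ hρ1, ?_⟩
  rw [hspec, Set.ncard_eq_three]
  exact ⟨0, 1, u⁻¹, zero_ne_one, by positivity, hρ1.ne, rfl⟩
end
end

section
/- If D is a strongly connected finite digraph with exactly three complementarity eigenvalues that contains an ∞(r,s)-subdigraph, then D has exactly r + s − 1 vertices. -/
open Matrix
open scoped Classical

noncomputable section

/-!
If a vertex `v₀` lies outside the `∞(r,s)`, let `C` be the strong component of `D - v₀`
containing it. The induced subdigraphs `{f 0} ⊂ C⃗_r ⊂ C ⊂ D` are strongly connected and each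
receives an arc from the next one. The zero extension of a Perron vector of an induced strongly
connected subdigraph is a complementarity eigenvector for its Perron root, and pairing with a
left Perron vector of the larger subdigraph shows that the Perron roots increase strictly along
the chain. This gives four complementarity eigenvalues.
-/

namespace Matrix

variable {n : Type*} {A B : Matrix n n ℝ}

lemma one_add_apply_nonneg (hA : ∀ i j, 0 ≤ A i j) (i j : n) : 0 ≤ (1 + A) i j := by
  rw [add_apply, one_apply]
  exact add_nonneg (by split_ifs <;> norm_num) (hA i j)

variable [Fintype n]

lemma one_add_pow_succ_apply (A : Matrix n n ℝ) (m : ℕ) (i j : n) :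
    ((1 + A) ^ (m + 1)) i j = ((1 + A) ^ m) i j + ∑ k, ((1 + A) ^ m) i k * A k j := by
  rw [pow_succ, mul_add, mul_one, add_apply, mul_apply]

lemma one_add_pow_apply_pos_of_le (hA : ∀ i j, 0 ≤ A i j) {m m' : ℕ} (hm : m ≤ m') {i j : n}
    (h : 0 < ((1 + A) ^ m) i j) : 0 < ((1 + A) ^ m') i j := by
  induction m', hm using Nat.le_induction with
  | base => exact h
  | succ m' _ ih =>
    rw [one_add_pow_succ_apply]
    exact add_pos_of_pos_of_nonneg ih <| Finset.sum_nonneg fun k _ =>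
      mul_nonneg (pow_apply_nonneg (one_add_apply_nonneg hA) m' i k) (hA k j)

lemma exists_one_add_pow_apply_pos (hA : ∀ i j, 0 ≤ A i j) {i j : n}
    (h : Relation.ReflTransGen (fun a b => 0 < A a b) i j) : ∃ m : ℕ, 0 < ((1 + A) ^ m) i j := by
  induction h with
  | refl => exact ⟨0, by simp⟩
  | @tail k j _ hkj ih =>
    obtain ⟨m, hm⟩ := ih
    refine ⟨m + 1, ?_⟩
    rw [one_add_pow_succ_apply]
    refine add_pos_of_nonneg_of_pos (pow_apply_nonneg (one_add_apply_nonneg hA) m i j) ?_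
    exact (mul_pos hm hkj).trans_le <| Finset.single_le_sum (f := fun l => ((1 + A) ^ m) i l * A l j)
      (fun l _ => mul_nonneg (pow_apply_nonneg (one_add_apply_nonneg hA) m i l) (hA l j))
      (Finset.mem_univ k)

lemma exists_pos_commute_of_reflTransGen (hA : ∀ i j, 0 ≤ A i j)
    (hconn : ∀ i j, Relation.ReflTransGen (fun a b => 0 < A a b) i j) :
    ∃ B : Matrix n n ℝ, (∀ i j, 0 < B i j) ∧ Commute A B := by
  choose m hm using fun p : n × n => exists_one_add_pow_apply_pos hA (hconn p.1 p.2)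
  refine ⟨(1 + A) ^ Finset.univ.sup m, fun i j => ?_, ?_⟩
  · exact one_add_pow_apply_pos_of_le hA (Finset.le_sup (Finset.mem_univ (i, j))) (hm (i, j))
  · exact ((Commute.one_right A).add_right (Commute.refl A)).pow_right _

lemma mulVec_apply_pos (hB : ∀ i j, 0 < B i j) {x : n → ℝ} (hx : 0 ≤ x) (hx0 : x ≠ 0) (i : n) :
    0 < (B *ᵥ x) i := by
  obtain ⟨j, hj⟩ : ∃ j, 0 < x j := by
    by_contra! h
    exact hx0 (le_antisymm h hx)
  exact (mul_pos (hB i j) hj).trans_le <| Finset.single_le_sum (f := fun k => B i k * x k)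
    (fun k _ => mul_nonneg (hB i k).le (hx k)) (Finset.mem_univ j)

/-- Collatz–Wielandt: maximise `x ↦ minᵢ (A B x)ᵢ / (B x)ᵢ` over the standard simplex; at a
maximiser `x`, the positive vector `B x` is an eigenvector, since otherwise `B` would push
`B x` to a strictly better point. -/
theorem exists_pos_eigenvector_of_commute [Nonempty n] (hB : ∀ i j, 0 < B i j)
    (hAB : Commute A B) : ∃ (ρ : ℝ) (y : n → ℝ), (∀ i, 0 < y i) ∧ A *ᵥ y = ρ • y := by
  set φ : (n → ℝ) → ℝ := fun x =>
    Finset.univ.inf' Finset.univ_nonempty fun i => (A *ᵥ (B *ᵥ x)) i / (B *ᵥ x) i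
  have hpos : ∀ x ∈ stdSimplex ℝ n, ∀ i, 0 < (B *ᵥ x) i := fun x hx =>
    mulVec_apply_pos hB hx.1 fun h0 => by simpa [h0] using hx.2
  have hφ : ContinuousOn φ (stdSimplex ℝ n) :=
    ContinuousOn.finset_inf'_apply _ fun i _ =>
      ContinuousOn.div (by fun_prop) (by fun_prop) fun x hx => (hpos x hx i).ne'
  obtain ⟨x, hx, hmax⟩ := (isCompact_stdSimplex ℝ n).exists_isMaxOn
    ⟨_, single_mem_stdSimplex ℝ (Classical.arbitrary n)⟩ hφ
  set y := B *ᵥ x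
  have hy : ∀ i, 0 < y i := hpos x hx
  refine ⟨φ x, y, hy, ?_⟩
  have hle : φ x • y ≤ A *ᵥ y := fun i =>
    (le_div_iff₀ (hy i)).1 (Finset.inf'_le _ (Finset.mem_univ i))
  by_contra hne
  have hgap : ∀ i, φ x * (B *ᵥ y) i < (A *ᵥ (B *ᵥ y)) i := by
    intro i
    have h := mulVec_apply_pos hB (sub_nonneg.2 hle) (sub_ne_zero.2 hne) i
    rwa [mulVec_sub, mulVec_mulVec, ← hAB.eq, ← mulVec_mulVec, mulVec_smul, Pi.sub_apply,
      Pi.smul_apply, smul_eq_mul, sub_pos] at h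
  set c := ∑ i, y i
  have hc : 0 < c := Finset.sum_pos (fun i _ => hy i) Finset.univ_nonempty
  have hx' : c⁻¹ • y ∈ stdSimplex ℝ n :=
    ⟨fun i => mul_nonneg (inv_nonneg.2 hc.le) (hy i).le, by
      simp only [Pi.smul_apply, smul_eq_mul, ← Finset.mul_sum]; exact inv_mul_cancel₀ hc.ne'⟩
  refine (show φ (c⁻¹ • y) ≤ φ x from hmax hx').not_gt ((Finset.lt_inf'_iff _).2 fun i _ => ?_)
  rw [mulVec_smul, mulVec_smul, Pi.smul_apply, Pi.smul_apply, smul_eq_mul, smul_eq_mul,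
    mul_div_mul_left _ _ (inv_ne_zero hc.ne'), lt_div_iff₀ (mulVec_apply_pos hB
      (fun j => (hy j).le) (fun h0 => (hy i).ne' (congrFun h0 i)) i)]
  exact hgap i

theorem exists_pos_eigenvector [Nonempty n] (hA : ∀ i j, 0 ≤ A i j)
    (hconn : ∀ i j, Relation.ReflTransGen (fun a b => 0 < A a b) i j) :
    ∃ (ρ : ℝ) (y : n → ℝ), (∀ i, 0 < y i) ∧ A *ᵥ y = ρ • y :=
  have ⟨_, hB, hAB⟩ := exists_pos_commute_of_reflTransGen hA hconn
  exists_pos_eigenvector_of_commute hB hAB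

end Matrix

section PerronVectorOn

variable {V : Type*} [Fintype V] {A : Matrix V V ℝ} {S T : Set V} {ρ : ℝ} {x : V → ℝ}

/-- The zero extension of a positive eigenvector of the principal submatrix of `A` on `S`. -/
structure IsPerronVectorOn (A : Matrix V V ℝ) (S : Set V) (ρ : ℝ) (x : V → ℝ) : Prop where
  nonneg : 0 ≤ x
  pos_iff : ∀ v, 0 < x v ↔ v ∈ S
  mulVec_eq : ∀ v ∈ S, (A *ᵥ x) v = ρ * x v

namespace IsPerronVectorOn

lemma eq_zero_of_notMem (h : IsPerronVectorOn A S ρ x) {v : V} (hv : v ∉ S) : x v = 0 :=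
  le_antisymm (not_lt.1 fun hlt => hv ((h.pos_iff v).1 hlt)) (h.nonneg v)

lemma smul_le_mulVec (hA : ∀ i j, 0 ≤ A i j) (h : IsPerronVectorOn A S ρ x) : ρ • x ≤ A *ᵥ x := by
  intro v
  by_cases hv : v ∈ S
  · simp [h.mulVec_eq v hv]
  · rw [Pi.smul_apply, h.eq_zero_of_notMem hv, smul_zero]
    exact Finset.sum_nonneg fun u _ => mul_nonneg (hA v u) (h.nonneg u)

lemma dotProduct_mulVec (h : IsPerronVectorOn A S ρ x) {z : V → ℝ} (hz : ∀ v ∉ S, z v = 0) :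
    z ⬝ᵥ (A *ᵥ x) = ρ * (z ⬝ᵥ x) := by
  rw [dotProduct, dotProduct, Finset.mul_sum]
  refine Finset.sum_congr rfl fun v _ => ?_
  by_cases hv : v ∈ S
  · rw [h.mulVec_eq v hv]; ring
  · rw [hz v hv]; ring

lemma mem_compSpec (hA : ∀ i j, 0 ≤ A i j) (h : IsPerronVectorOn A S ρ x) (hS : S.Nonempty) :
    ρ ∈ compSpec A := by
  obtain ⟨v, hv⟩ := hS
  refine ⟨x, fun h0 => ((h.pos_iff v).2 hv).ne' (congrFun h0 v), h.nonneg,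
    sub_nonneg.2 (h.smul_le_mulVec hA), ?_⟩
  rw [dotProduct_sub, dotProduct_smul, h.dotProduct_mulVec fun w => h.eq_zero_of_notMem,
    smul_eq_mul, sub_self]

lemma dotProduct_pos (h : IsPerronVectorOn A S ρ x) {z : V → ℝ} (hz : 0 ≤ z) {u : V}
    (hu : u ∈ S) (hzu : 0 < z u) : 0 < z ⬝ᵥ x :=
  (mul_pos hzu ((h.pos_iff u).2 hu)).trans_le <| Finset.single_le_sum (f := fun w => z w * x w)
    (fun w _ => mul_nonneg (hz w) (h.nonneg w)) (Finset.mem_univ u)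

/-- Pairing with a left Perron vector `z` of `T` gives `z ⬝ A x = ρ_T (z ⬝ x)`, while
`A x ≥ ρ_S x` with strict inequality at the tail `v` of an arc entering `S`. -/
theorem lt_of_entry_pos (hA : ∀ i j, 0 ≤ A i j) (hST : S ⊆ T) {ρT τ : ℝ} {y z : V → ℝ}
    (hx : IsPerronVectorOn A S ρ x) (hy : IsPerronVectorOn A T ρT y)
    (hz : IsPerronVectorOn Aᵀ T τ z) {v u : V} (hvT : v ∈ T) (hvS : v ∉ S) (hu : u ∈ S)
    (hvu : 0 < A v u) : ρ < ρT := by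
  have hswap : ∀ w : V → ℝ, z ⬝ᵥ (A *ᵥ w) = w ⬝ᵥ (Aᵀ *ᵥ z) := fun w => by
    rw [Matrix.dotProduct_mulVec, ← Matrix.mulVec_transpose, dotProduct_comm]
  have hzu : 0 < z u := (hz.pos_iff u).2 (hST hu)
  have hτ : τ = ρT := by
    have h := (hz.dotProduct_mulVec fun w hw => hy.eq_zero_of_notMem hw).symm.trans
      ((hswap y).symm.trans (hy.dotProduct_mulVec fun w hw => hz.eq_zero_of_notMem hw))
    rw [dotProduct_comm] at h
    exact mul_right_cancel₀ (hy.dotProduct_pos hz.nonneg (hST hu) hzu).ne' h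
  have hAx : 0 < (A *ᵥ x) v :=
    (mul_pos hvu ((hx.pos_iff u).2 hu)).trans_le <| Finset.single_le_sum
      (f := fun w => A v w * x w) (fun w _ => mul_nonneg (hA v w) (hx.nonneg w))
      (Finset.mem_univ u)
  have hlt : ρ * (z ⬝ᵥ x) < z ⬝ᵥ (A *ᵥ x) := by
    rw [dotProduct, dotProduct, Finset.mul_sum]
    refine Finset.sum_lt_sum (fun w _ => ?_) ⟨v, Finset.mem_univ v, ?_⟩
    · rw [mul_left_comm]
      exact mul_le_mul_of_nonneg_left (hx.smul_le_mulVec hA w) (hz.nonneg w)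
    · rw [hx.eq_zero_of_notMem hvS, mul_zero, mul_zero]
      exact mul_pos ((hz.pos_iff v).2 hvT) hAx
  rw [hswap, hz.dotProduct_mulVec fun w hw => hx.eq_zero_of_notMem fun hwS => hw (hST hwS),
    hτ, dotProduct_comm x z] at hlt
  exact lt_of_mul_lt_mul_right hlt (hx.dotProduct_pos hz.nonneg hu hzu).le

end IsPerronVectorOn

lemma exists_isPerronVectorOn (hA : ∀ i j, 0 ≤ A i j) (hS : S.Nonempty)
    (hconn : ∀ a b : S, Relation.ReflTransGen (fun a b : S => 0 < A a b) a b) :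
    ∃ ρ x, IsPerronVectorOn A S ρ x := by
  have := hS.to_subtype
  obtain ⟨ρ, y, hy, hAy⟩ :=
    Matrix.exists_pos_eigenvector (A := A.submatrix ((↑) : S → V) (↑)) (fun a b => hA a b) hconn
  refine ⟨ρ, fun v => if hv : v ∈ S then y ⟨v, hv⟩ else 0, fun v => ?_, fun v => ?_, ?_⟩
  · show 0 ≤ dite _ _ _
    split_ifs
    exacts [(hy _).le, le_rfl]
  · show 0 < dite _ _ _ ↔ _
    split_ifs with hv
    exacts [iff_of_true (hy _) hv, iff_of_false (lt_irrefl 0) hv]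
  · intro v hv
    rw [dif_pos hv, ← smul_eq_mul, ← Pi.smul_apply, ← hAy]
    simp only [Matrix.mulVec, dotProduct]
    rw [← Fintype.sum_subtype_add_sum_subtype (· ∈ S), Finset.sum_eq_zero fun (u : {u // u ∉ S}) _ => by rw [dif_neg u.2, mul_zero], add_zero]
    exact Finset.sum_congr rfl fun u _ => by rw [dif_pos u.2]; rfl

end PerronVectorOn

section Digraph

variable {V : Type*} {E R : V → V → Prop}

lemma reflTransGen_of_cycle {m : ℕ} [NeZero m] {c : ZMod m → V} (hc : ∀ i, R (c i) (c (i + 1)))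
    (i j : ZMod m) : Relation.ReflTransGen R (c i) (c j) := by
  have h : ∀ k : ℕ, Relation.ReflTransGen R (c i) (c (i + k)) := by
    intro k
    induction k with
    | zero => simpa using Relation.ReflTransGen.refl
    | succ k ih => simpa [add_assoc] using ih.tail (hc (i + k))
  simpa using h (j - i).val

lemma stronglyConnected_induceRel_range_cycle {m : ℕ} [NeZero m] {c : ZMod m → V}
    (hc : ∀ i, E (c i) (c (i + 1))) : StronglyConnected (induceRel E (Set.range c)) := by
  rintro ⟨_, i, rfl⟩ ⟨_, j, rfl⟩
  exact reflTransGen_of_cycle (c := fun i => (⟨c i, i, rfl⟩ : Set.range c)) hc i j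

lemma Relation.ReflTransGen.induceRel {S : Set V} {a b : V} (h : Relation.ReflTransGen R a b)
    (hS : ∀ p, Relation.ReflTransGen R a p → Relation.ReflTransGen R p b → p ∈ S) :
    Relation.ReflTransGen (induceRel R S) ⟨a, hS a .refl h⟩ ⟨b, hS b h .refl⟩ := by
  induction h with
  | refl => exact .refl
  | @tail c b hac hcb ih =>
    exact (ih fun p hap hpc => hS p hap (hpc.tail hcb)).tail hcb

lemma mem_component {u w : V} : u ∈ component R w ↔ Reach R u w ∧ Reach R w u := Iff.rfl

lemma range_subset_component_of_cycle {m : ℕ} [NeZero m] {c : ZMod m → V}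
    (hc : ∀ i, R (c i) (c (i + 1))) (i : ZMod m) : Set.range c ⊆ component R (c i) := by
  rintro _ ⟨j, rfl⟩
  exact ⟨reflTransGen_of_cycle hc j i, reflTransGen_of_cycle hc i j⟩

lemma notMem_component_of_forall_not {v w : V} (hvw : v ≠ w) (hv : ∀ b, ¬ R v b) :
    v ∉ component R w := fun h => by
  obtain heq | ⟨_, hstep, _⟩ := h.1.cases_head
  exacts [hvw heq, hv _ hstep]

lemma stronglyConnected_induceRel_component (w : V) :
    StronglyConnected (induceRel R (component R w)) := by
  rintro ⟨a, haw, hwa⟩ ⟨b, hbw, hwb⟩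
  exact (haw.trans hwb).induceRel fun p hap hpb => mem_component.2 ⟨hpb.trans hbw, hwa.trans hap⟩

lemma stronglyConnected_induceRel_univ (h : StronglyConnected E) :
    StronglyConnected (induceRel E Set.univ) := by
  rintro ⟨a, -⟩ ⟨b, -⟩
  exact (h a b).induceRel fun _ _ _ => Set.mem_univ _

lemma stronglyConnected_induceRel_singleton (v : V) :
    StronglyConnected (induceRel E {v}) := fun a b => by
  rw [Subsingleton.elim a b]
  exact .refl

lemma StronglyConnected.mono {R' : V → V → Prop} (h : StronglyConnected R) (hR : R ≤ R') :
    StronglyConnected R' := fun a b => Relation.ReflTransGen.mono hR _ _ (h a b)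

lemma Relation.ReflTransGen.exists_arc_into {S : Set V} {a b : V}
    (h : Relation.ReflTransGen R a b) (ha : a ∉ S) (hb : b ∈ S) :
    ∃ p, p ∉ S ∧ ∃ q ∈ S, R p q := by
  induction h with
  | refl => exact absurd hb ha
  | @tail c b _ hcb ih =>
    by_cases hc : c ∈ S
    · exact ih hc
    · exact ⟨c, hc, b, hb, hcb⟩

end Digraph

section AdjMat

variable {V : Type*} {E : V → V → Prop} {S T : Set V} {ρ σ : ℝ} {x y : V → ℝ}

lemma adjMat_nonneg_s17 (E : V → V → Prop) (i j : V) : 0 ≤ adjMat E i j := by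
  simp only [adjMat, Matrix.of_apply]
  split_ifs <;> norm_num

lemma adjMat_pos_iff {i j : V} : 0 < adjMat E i j ↔ E i j := by
  simp only [adjMat, Matrix.of_apply]
  split_ifs with h <;> simp [h]

lemma StronglyConnected.reflTransGen_adjMat_pos (h : StronglyConnected (induceRel E S))
    (a b : S) : Relation.ReflTransGen (fun a b : S => 0 < adjMat E a b) a b :=
  Relation.ReflTransGen.mono (fun _ _ hab => adjMat_pos_iff.2 hab) _ _ (h a b)

variable [Fintype V]

lemma exists_isPerronVectorOn_adjMat (hS : StronglyConnected (induceRel E S)) (hne : S.Nonempty) :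
    ∃ ρ x, IsPerronVectorOn (adjMat E) S ρ x :=
  exists_isPerronVectorOn (adjMat_nonneg_s17 E) hne hS.reflTransGen_adjMat_pos

lemma IsPerronVectorOn.lt_of_arc (hx : IsPerronVectorOn (adjMat E) S ρ x)
    (hy : IsPerronVectorOn (adjMat E) T σ y) (hST : S ⊆ T)
    (hT : StronglyConnected (induceRel E T)) {v u : V} (hvT : v ∈ T) (hvS : v ∉ S) (hu : u ∈ S)
    (hvu : E v u) : ρ < σ := by
  obtain ⟨τ, z, hz⟩ := exists_isPerronVectorOn (A := (adjMat E)ᵀ)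
    (fun i j => adjMat_nonneg_s17 E j i) ⟨v, hvT⟩
    fun a b => Relation.reflTransGen_swap.2 (hT.reflTransGen_adjMat_pos b a)
  exact hx.lt_of_entry_pos (adjMat_nonneg_s17 E) hST hy hz hvT hvS hu (adjMat_pos_iff.2 hvu)

/-- The Perron roots of the `S i` increase strictly in `i`. -/
theorem le_encard_compSpec_of_chain {m : ℕ} (S : Fin (m + 1) → Set V)
    (hsc : ∀ i, StronglyConnected (induceRel E (S i))) (hne : (S 0).Nonempty)
    (hle : ∀ i : Fin m, S i.castSucc ⊆ S i.succ)
    (harc : ∀ i : Fin m, ∃ v ∈ S i.succ, v ∉ S i.castSucc ∧ ∃ u ∈ S i.castSucc, E v u) :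
    (m + 1 : ℕ∞) ≤ (compSpec (adjMat E)).encard := by
  have hne' : ∀ i, (S i).Nonempty := Fin.cases hne fun i => ⟨_, (harc i).choose_spec.1⟩
  choose ρ x hx using fun i => exists_isPerronVectorOn_adjMat (hsc i) (hne' i)
  have hρ : StrictMono ρ := Fin.strictMono_iff_lt_succ.2 fun i => by
    obtain ⟨v, hv, hvS, u, hu, hvu⟩ := harc i
    exact (hx _).lt_of_arc (hx _) (hle i) (hsc _) hv hvS hu hvu
  calc (m + 1 : ℕ∞) = (Set.range ρ).encard := by
        rw [← Set.image_univ, hρ.injective.injOn.encard_image, Set.encard_univ,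
          ENat.card_eq_coe_fintype_card, Fintype.card_fin]
        push_cast; rfl
    _ ≤ _ := Set.encard_le_encard <| Set.range_subset_iff.2 fun i =>
        (hx i).mem_compSpec (adjMat_nonneg_s17 E) (hne' i)

end AdjMat

section Infty

variable {V : Type*} [Fintype V] {E : V → V → Prop} {r s : ℕ} {f : ZMod r → V} {g : ZMod s → V}

lemma ncard_range_union_range (hf : f.Injective) (hg : g.Injective)
    (hint : Set.range f ∩ Set.range g = {f 0}) : (Set.range f ∪ Set.range g).ncard = r + s - 1 := by
  have h := Set.ncard_union_add_ncard_inter (Set.range f) (Set.range g)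
  rw [hint, Set.ncard_singleton, Set.ncard_range_of_injective hf,
    Set.ncard_range_of_injective hg, Nat.card_zmod, Nat.card_zmod] at h
  omega

lemma four_le_encard_compSpec (hr : 2 ≤ r) (hs : 2 ≤ s) (hsc : StronglyConnected E)
    (hf : f.Injective) (hg : g.Injective) (hfg : f 0 = g 0)
    (hint : Set.range f ∩ Set.range g = {f 0}) (hEf : ∀ i, E (f i) (f (i + 1)))
    (hEg : ∀ j, E (g j) (g (j + 1))) {v₀ : V} (hv₀ : v₀ ∉ Set.range f ∪ Set.range g) :
    4 ≤ (compSpec (adjMat E)).encard := by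
  have : Fact (1 < r) := ⟨hr⟩
  have : Fact (1 < s) := ⟨hs⟩
  set E' : V → V → Prop := fun a b => E a b ∧ a ≠ v₀ ∧ b ≠ v₀
  set C := component E' (f 0)
  have hE' : ∀ {a b}, E a b → a ∈ Set.range f ∪ Set.range g → b ∈ Set.range f ∪ Set.range g →
      E' a b := fun h ha hb => ⟨h, ne_of_mem_of_not_mem ha hv₀, ne_of_mem_of_not_mem hb hv₀⟩
  have hfC : Set.range f ⊆ C := range_subset_component_of_cycle
    (fun i => hE' (hEf i) (Or.inl ⟨_, rfl⟩) (Or.inl ⟨_, rfl⟩)) 0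
  have hgC : Set.range g ⊆ C := (range_subset_component_of_cycle
    (fun j => hE' (hEg j) (Or.inr ⟨_, rfl⟩) (Or.inr ⟨_, rfl⟩)) 0).trans_eq (by rw [← hfg])
  have hv₀C : v₀ ∉ C :=
    notMem_component_of_forall_not (fun h => hv₀ (h ▸ Or.inl ⟨0, rfl⟩)) fun _ h => h.2.1 rfl
  obtain ⟨p, hpC, q, hqC, hpq⟩ := (hsc v₀ (f 0)).exists_arc_into hv₀C (hfC ⟨0, rfl⟩)
  have hf₁ : f (-1) ∉ ({f 0} : Set V) := fun h => neg_ne_zero.2 one_ne_zero (hf h)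
  have hg₁ : g (-1) ∉ Set.range f := fun h => by
    have h' : g (-1) ∈ Set.range f ∩ Set.range g := ⟨h, -1, rfl⟩
    rw [hint, Set.mem_singleton_iff, hfg] at h'
    exact neg_ne_zero.2 one_ne_zero (hg h')
  refine le_encard_compSpec_of_chain (m := 3) ![{f 0}, Set.range f, C, Set.univ] ?_ ⟨f 0, rfl⟩
    ?_ ?_
  · intro i
    fin_cases i
    · exact stronglyConnected_induceRel_singleton _
    · exact stronglyConnected_induceRel_range_cycle hEf
    · exact (stronglyConnected_induceRel_component _).mono fun _ _ h => h.1
    · exact stronglyConnected_induceRel_univ hsc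
  · intro i
    fin_cases i
    exacts [Set.singleton_subset_iff.2 ⟨0, rfl⟩, hfC, Set.subset_univ _]
  · intro i
    fin_cases i
    · exact ⟨f (-1), ⟨-1, rfl⟩, hf₁, f 0, rfl, by simpa using hEf (-1)⟩
    · exact ⟨g (-1), hgC ⟨-1, rfl⟩, hg₁, f 0, ⟨0, rfl⟩, by simpa [hfg] using hEg (-1)⟩
    · exact ⟨p, Set.mem_univ p, hpC, q, hqC, hpq⟩

end Infty

theorem stmt17_general {V : Type*} [Fintype V] (E : V → V → Prop) (r s : ℕ)
    (hr : 2 ≤ r) (hs : 2 ≤ s) (hsc : StronglyConnected E)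
    (h3 : (compSpec (adjMat E)).ncard = 3) (hsub : InftySub E r s) :
    Fintype.card V = r + s - 1 := by
  obtain ⟨f, g, hf, hg, hfg, hint, hEf, hEg⟩ := hsub
  rw [← ncard_range_union_range hf hg hint]
  by_contra hne
  obtain ⟨v₀, hv₀⟩ : ∃ v₀, v₀ ∉ Set.range f ∪ Set.range g := by
    by_contra! hall
    rw [Set.eq_univ_of_forall hall, Set.ncard_univ, Nat.card_eq_fintype_card] at hne
    exact hne rfl
  have h4 := four_le_encard_compSpec hr hs hsc hf hg hfg hint hEf hEg hv₀
  rw [← (Set.finite_of_ncard_ne_zero (by omega)).cast_ncard_eq, h3] at h4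
  exact absurd h4 (by decide)

/-- a strongly connected digraph with exactly three complementarity
eigenvalues containing an `∞(r,s)`-subdigraph has exactly `r + s - 1` vertices. -/
theorem stmt17 {V : Type*} [Fintype V] (E : V → V → Prop) (r s : ℕ)
    (hr : 2 ≤ r) (hs : 2 ≤ s) (hloop : ∀ v, ¬ E v v) (hsc : StronglyConnected E)
    (h3 : (compSpec (adjMat E)).ncard = 3) (hsub : InftySub E r s) :
    Fintype.card V = r + s - 1 :=
  stmt17_general E r s hr hs hsc h3 hsub
end
end
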